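/- Let (V,μ,ν) be a weighted graph in which every node has only finitely many neighbours, and let p ≥ 3 be an odd integer. Let u : [0,∞) × V → ℝ be such that for every v ∈ V the function t ↦ u(t,v) is differentiable on [0,∞) (one-sidedly at 0) and satisfies ∂_t u(t,v) = −L_p u(t,v) for all t ≥ 0. Then for every v ∈ V the function t ↦ u(t,v) is (p−1)-times continuously differentiable on [0,∞), and its (p−1)-st derivative is Lipschitz continuous on every compact subinterval of [0,∞). -/

import Mathlib

/-- The discrete `p`-Laplacian on a weighted graph (pointwise, via a `tsum`). -/
noncomputable def pLap {V : Type*} (μ : V → V → ℝ) (ν : V → ℝ) (p : ℝ)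
    (f : V → ℝ) (v : V) : ℝ :=
  (1 / ν v) * ∑' w, μ v w * |f v - f w| ^ (p - 2) * (f v - f w)

/-!
For odd `p` the kernel `φ x = |x| ^ (p - 2) * x` of the `p`-Laplacian is `C^{p-2}` with
`(p-2)`-nd derivative a multiple of `|x|`, so it is of class `C^{p-2,1}`. The classes `C^{n,1}`
are closed under sums, products and composition, and `∂ₜ u(·, v)` is a finite combination of the
functions `φ (u(·, v) - u(·, w))`. Hence `C^{k,1}` regularity of all the `u(·, w)` gives
`C^{k+1,1}` regularity of each of them as long as `k ≤ p - 2`, and bootstrapping from `C^{0,1}`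
yields `C^{p-1,1}`.
-/

open Set

lemma LocallyLipschitzOn.congr {α β : Type*} [PseudoEMetricSpace α] [PseudoEMetricSpace β]
    {s : Set α} {f g : α → β} (hf : LocallyLipschitzOn s f) (hfg : EqOn g f s) :
    LocallyLipschitzOn s g := by
  rw [locallyLipschitzOn_iff_restrict, domRestrict_eq_domRestrict_iff.2 hfg]
  exact hf.restrict

lemma LocallyLipschitz.comp_locallyLipschitzOn {α β γ : Type*} [PseudoEMetricSpace α]
    [PseudoEMetricSpace β] [PseudoEMetricSpace γ] {s : Set α} {g : β → γ} {f : α → β}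
    (hg : LocallyLipschitz g) (hf : LocallyLipschitzOn s f) : LocallyLipschitzOn s (g ∘ f) :=
  locallyLipschitzOn_iff_restrict.2 (hg.comp hf.restrict)

lemma LocallyLipschitzOn.prodMk {α β γ : Type*} [PseudoEMetricSpace α]
    [PseudoEMetricSpace β] [PseudoEMetricSpace γ] {s : Set α} {f : α → β} {g : α → γ}
    (hf : LocallyLipschitzOn s f) (hg : LocallyLipschitzOn s g) :
    LocallyLipschitzOn s fun x => (f x, g x) :=
  locallyLipschitzOn_iff_restrict.2 (hf.restrict.prodMk hg.restrict)

/-- The class `C^{n,1}` on `s`. Local Lipschitz continuity on `s` amounts to Lipschitz continuity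
on every compact subset of `s` (`LocallyLipschitzOn.exists_lipschitzOnWith_of_compact`). -/
def ContDiffLipOn (n : ℕ) (f : ℝ → ℝ) (s : Set ℝ) : Prop :=
  ContDiffOn ℝ n f s ∧ LocallyLipschitzOn s (iteratedDerivWithin n f s)

section ContDiffLipOn

variable {s : Set ℝ} {n : ℕ} {f g : ℝ → ℝ}

theorem ContDiffLipOn.congr (h : ContDiffLipOn n f s) (hfg : EqOn g f s) :
    ContDiffLipOn n g s :=
  ⟨h.1.congr hfg, h.2.congr (iteratedDerivWithin_congr hfg)⟩

theorem contDiffLipOn_zero : ContDiffLipOn 0 f s ↔ LocallyLipschitzOn s f := by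
  simp only [ContDiffLipOn, iteratedDerivWithin_zero, CharP.cast_eq_zero, contDiffOn_zero,
    and_iff_right_iff_imp]
  exact LocallyLipschitzOn.continuousOn

theorem contDiffLipOn_succ_iff (hs : UniqueDiffOn ℝ s) :
    ContDiffLipOn (n + 1) f s ↔ DifferentiableOn ℝ f s ∧ ContDiffLipOn n (derivWithin f s) s := by
  simp only [ContDiffLipOn, Nat.cast_add, Nat.cast_one, contDiffOn_succ_iff_derivWithin hs,
    iteratedDerivWithin_succ', and_assoc]
  simp

theorem ContDiffLipOn.of_hasDerivWithinAt (hs : UniqueDiffOn ℝ s) {f' : ℝ → ℝ}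
    (hf : ∀ x ∈ s, HasDerivWithinAt f (f' x) s x) (hf' : ContDiffLipOn n f' s) :
    ContDiffLipOn (n + 1) f s :=
  (contDiffLipOn_succ_iff hs).2 ⟨fun x hx => (hf x hx).differentiableWithinAt,
    hf'.congr fun x hx => (hf x hx).derivWithin (hs x hx)⟩

theorem ContDiffOn.contDiffLipOn (hs : UniqueDiffOn ℝ s) (hconv : Convex ℝ s)
    (hf : ContDiffOn ℝ (n + 1) f s) : ContDiffLipOn n f s := by
  induction n generalizing f with
  | zero =>
    have hf1 : ContDiffOn ℝ 1 f s := by exact_mod_cast hf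
    exact contDiffLipOn_zero.2 (hf1.locallyLipschitzOn hconv)
  | succ n ih =>
    rw [Nat.cast_add, Nat.cast_one, contDiffOn_succ_iff_derivWithin hs] at hf
    exact (contDiffLipOn_succ_iff hs).2 ⟨hf.1, ih hf.2.2⟩

theorem ContDiffLipOn.of_succ (hs : UniqueDiffOn ℝ s) (hconv : Convex ℝ s)
    (h : ContDiffLipOn (n + 1) f s) : ContDiffLipOn n f s :=
  h.1.contDiffLipOn hs hconv

theorem ContDiffLipOn.of_le (hs : UniqueDiffOn ℝ s) (hconv : Convex ℝ s) {k : ℕ}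
    (h : ContDiffLipOn n f s) (hk : k ≤ n) : ContDiffLipOn k f s := by
  induction n, hk using Nat.le_induction with
  | base => exact h
  | succ n _ ih => exact ih (h.of_succ hs hconv)

theorem ContDiffLipOn.add (hs : UniqueDiffOn ℝ s) (hf : ContDiffLipOn n f s)
    (hg : ContDiffLipOn n g s) : ContDiffLipOn n (fun x => f x + g x) s :=
  ⟨hf.1.add hg.1, (hf.2.add hg.2).congr fun x hx =>
    iteratedDerivWithin_add hx hs (hf.1 x hx) (hg.1 x hx)⟩

theorem ContDiffLipOn.sub (hs : UniqueDiffOn ℝ s) (hf : ContDiffLipOn n f s)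
    (hg : ContDiffLipOn n g s) : ContDiffLipOn n (fun x => f x - g x) s :=
  ⟨hf.1.sub hg.1, (hf.2.sub hg.2).congr fun x hx =>
    iteratedDerivWithin_sub hx hs (hf.1 x hx) (hg.1 x hx)⟩

theorem ContDiffLipOn.const_mul (c : ℝ) (hf : ContDiffLipOn n f s) :
    ContDiffLipOn n (fun x => c * f x) s :=
  have hc : LocallyLipschitz fun x : ℝ => c * x :=
    (contDiff_const.mul (contDiff_id (𝕜 := ℝ) (n := 1))).locallyLipschitz
  ⟨contDiffOn_const.mul hf.1, (hc.comp_locallyLipschitzOn hf.2).congr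
    fun _ _ => iteratedDerivWithin_const_mul_field c f⟩

theorem ContDiffLipOn.sum (hs : UniqueDiffOn ℝ s) (hconv : Convex ℝ s) {ι : Type*} (S : Finset ι)
    {f : ι → ℝ → ℝ} (hf : ∀ i ∈ S, ContDiffLipOn n (f i) s) :
    ContDiffLipOn n (fun x => ∑ i ∈ S, f i x) s := by
  classical
  induction S using Finset.induction_on with
  | empty => simpa using (contDiffOn_const (c := (0 : ℝ))).contDiffLipOn hs hconv
  | insert i S hi ih =>
    simp only [Finset.sum_insert hi]
    exact (hf i (Finset.mem_insert_self i S)).add hs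
      (ih fun j hj => hf j (Finset.mem_insert_of_mem hj))

theorem ContDiffLipOn.mul (hs : UniqueDiffOn ℝ s) (hconv : Convex ℝ s)
    (hf : ContDiffLipOn n f s) (hg : ContDiffLipOn n g s) :
    ContDiffLipOn n (fun x => f x * g x) s := by
  induction n generalizing f g with
  | zero =>
    have hmul : LocallyLipschitz fun p : ℝ × ℝ => p.1 * p.2 :=
      (contDiff_mul (𝕜 := ℝ) (n := 1)).locallyLipschitz
    exact contDiffLipOn_zero.2 (hmul.comp_locallyLipschitzOn
      ((contDiffLipOn_zero.1 hf).prodMk (contDiffLipOn_zero.1 hg)))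
  | succ n ih =>
    obtain ⟨hfd, hf'⟩ := (contDiffLipOn_succ_iff hs).1 hf
    obtain ⟨hgd, hg'⟩ := (contDiffLipOn_succ_iff hs).1 hg
    refine (contDiffLipOn_succ_iff hs).2 ⟨hfd.mul hgd, ?_⟩
    refine ((ih hf' (hg.of_succ hs hconv)).add hs (ih (hf.of_succ hs hconv) hg')).congr
      fun x hx => derivWithin_mul (hfd x hx) (hgd x hx)

theorem ContDiffLipOn.comp (hs : UniqueDiffOn ℝ s) (hconv : Convex ℝ s)
    (hg : ContDiffLipOn n g univ) (hf : ContDiffLipOn n f s) :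
    ContDiffLipOn n (fun x => g (f x)) s := by
  induction n generalizing f g with
  | zero =>
    exact contDiffLipOn_zero.2 ((locallyLipschitzOn_univ.1 (contDiffLipOn_zero.1 hg))
      |>.comp_locallyLipschitzOn (contDiffLipOn_zero.1 hf))
  | succ n ih =>
    obtain ⟨hgd, hg'⟩ := (contDiffLipOn_succ_iff uniqueDiffOn_univ).1 hg
    obtain ⟨hfd, hf'⟩ := (contDiffLipOn_succ_iff hs).1 hf
    rw [derivWithin_univ] at hg'
    refine (contDiffLipOn_succ_iff hs).2 ⟨hgd.comp hfd (mapsTo_univ _ _), ?_⟩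
    refine ((ih hg' (hf.of_succ hs hconv)).mul hs hconv hf').congr fun x hx => ?_
    exact ((differentiableOn_univ.1 hgd (f x)).hasDerivAt.comp_hasDerivWithinAt x
      (hfd x hx).hasDerivWithinAt).derivWithin (hs x hx)

end ContDiffLipOn

theorem hasDerivAt_abs_pow_add_two (n : ℕ) (x : ℝ) :
    HasDerivAt (fun y : ℝ => |y| ^ (n + 2)) ((n + 2) * (|x| ^ n * x)) x := by
  have h := hasDerivAt_abs_rpow x (p := n + 2) (by linarith [n.cast_nonneg (α := ℝ)])
  simp only [add_sub_cancel_right] at h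
  convert h using 1
  · ext y; exact_mod_cast (Real.rpow_natCast |y| (n + 2)).symm
  · rw [Real.rpow_natCast]; ring

theorem hasDerivAt_abs_pow_mul_self (n : ℕ) (x : ℝ) :
    HasDerivAt (fun y : ℝ => |y| ^ n * y) ((n + 1) * |x| ^ n) x := by
  rcases eq_or_ne x 0 with rfl | hx
  · rw [hasDerivAt_iff_tendsto_slope_zero]
    have hslope : (fun t : ℝ => |t| ^ n) =ᶠ[nhdsWithin 0 {0}ᶜ]
        fun t => t⁻¹ • (|0 + t| ^ n * (0 + t) - |0| ^ n * 0) := by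
      filter_upwards [self_mem_nhdsWithin] with t (ht : t ≠ 0)
      simp only [zero_add, smul_eq_mul, mul_zero, sub_zero]
      field_simp
    convert (((continuous_abs.pow n).tendsto 0).mono_left nhdsWithin_le_nhds).congr' hslope
      using 2
    rcases n with _ | n <;> simp
  · refine (((hasDerivAt_abs hx).fun_pow n).fun_mul (hasDerivAt_id' x)).congr_deriv ?_
    rcases n with _ | n
    · simp
    · rw [Nat.add_sub_cancel, pow_succ, ← sign_mul_self x]
      push_cast
      ring

theorem contDiffLipOn_abs_pow_mul_self {m : ℕ} (hm : Odd m) :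
    ContDiffLipOn m (fun x : ℝ => |x| ^ m * x) univ := by
  obtain ⟨i, rfl⟩ := hm
  induction i with
  | zero =>
    have habs : ContDiffLipOn 0 (fun x : ℝ => |x| ^ 1) univ := by
      have hnorm : ContDiffLipOn 0 (fun x : ℝ => ‖x‖) univ :=
        contDiffLipOn_zero.2 lipschitzWith_one_norm.locallyLipschitz.locallyLipschitzOn
      simpa only [pow_one, Real.norm_eq_abs] using hnorm
    exact (habs.const_mul _).of_hasDerivWithinAt uniqueDiffOn_univ
      fun x _ => (hasDerivAt_abs_pow_mul_self 1 x).hasDerivWithinAt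
  | succ i ih =>
    rw [show 2 * (i + 1) + 1 = 2 * i + 1 + 2 by ring]
    have hpow : ContDiffLipOn (2 * i + 1 + 1) (fun x : ℝ => |x| ^ (2 * i + 1 + 2)) univ :=
      (ih.const_mul _).of_hasDerivWithinAt uniqueDiffOn_univ
        fun x _ => (hasDerivAt_abs_pow_add_two _ x).hasDerivWithinAt
    exact (hpow.const_mul _).of_hasDerivWithinAt uniqueDiffOn_univ
      fun x _ => (hasDerivAt_abs_pow_mul_self _ x).hasDerivWithinAt

theorem contDiffLipOn_of_hasDerivWithinAt_sum {ι : Type*} {s : Set ℝ} (hs : UniqueDiffOn ℝ s)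
    (hconv : Convex ℝ s) {m : ℕ} {φ : ℝ → ℝ} (hφ : ContDiffLipOn m φ univ) (c : ι → ℝ)
    (a : ι → ι → ℝ) (S : ι → Finset ι) {x : ι → ℝ → ℝ}
    (hx : ∀ i, ∀ t ∈ s,
      HasDerivWithinAt (x i) (c i * ∑ j ∈ S i, a i j * φ (x i t - x j t)) s t) (i : ι) :
    ContDiffLipOn (m + 1) (x i) s := by
  have hrhs : ∀ k ≤ m, (∀ j, ContDiffLipOn k (x j) s) → ∀ i,
      ContDiffLipOn k (fun t => c i * ∑ j ∈ S i, a i j * φ (x i t - x j t)) s :=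
    fun k hk hxk i => (ContDiffLipOn.sum hs hconv _ fun j _ =>
      (((hφ.of_le uniqueDiffOn_univ convex_univ hk).comp hs hconv
        ((hxk i).sub hs (hxk j))).const_mul _)).const_mul _
  have hC1 : ∀ i, ContDiffOn ℝ (0 + 1) (x i) s := by
    have hcont : ∀ i, ContinuousOn (x i) s := fun i t ht => (hx i t ht).continuousWithinAt
    intro i
    rw [contDiffOn_succ_iff_derivWithin hs]
    refine ⟨fun t ht => (hx i t ht).differentiableWithinAt, by simp, contDiffOn_zero.2 ?_⟩
    refine ContinuousOn.congr ?_ fun t ht => (hx i t ht).derivWithin (hs t ht)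
    exact continuousOn_const.mul (continuousOn_finsetSum _ fun j _ => continuousOn_const.mul
      ((continuousOn_univ.1 hφ.1.continuousOn).comp_continuousOn ((hcont i).sub (hcont j))))
  have hreg : ∀ k ≤ m + 1, ∀ i, ContDiffLipOn k (x i) s := by
    intro k hk
    induction k with
    | zero => exact fun i => (hC1 i).contDiffLipOn hs hconv
    | succ k ih =>
      exact fun i => (hrhs k (by omega) (ih (by omega)) i).of_hasDerivWithinAt hs (hx i)
  exact hreg (m + 1) le_rfl i

theorem pLap_eq_sum {V : Type*} (μ : V → V → ℝ) (ν : V → ℝ) {p : ℕ} (hp : 2 ≤ p) (f : V → ℝ)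
    (v : V) {S : Finset V} (hS : ∀ w ∉ S, μ v w = 0) :
    pLap μ ν p f v = 1 / ν v * ∑ w ∈ S, μ v w * (|f v - f w| ^ (p - 2) * (f v - f w)) := by
  rw [pLap, tsum_eq_sum fun w hw => by simp [hS w hw]]
  congr 1
  refine Finset.sum_congr rfl fun w _ => ?_
  rw [← Nat.cast_ofNat, ← Nat.cast_sub hp, Real.rpow_natCast, mul_assoc]

theorem stmt7_general {V : Type*}
    (μ : V → V → ℝ) (ν : V → ℝ)
    (hfin : ∀ v, {w | μ v w ≠ 0}.Finite)
    (p : ℕ) (hpodd : Odd p) (hp3 : 3 ≤ p)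
    (u : ℝ → V → ℝ)
    (hder : ∀ v, ∀ t, 0 ≤ t →
      HasDerivWithinAt (fun s => u s v) (-(pLap μ ν (p : ℝ) (u t) v)) (Set.Ici 0) t) :
    ∀ v, ContDiffOn ℝ (p - 1 : ℕ) (fun t => u t v) (Set.Ici 0) ∧
      ∀ a b : ℝ, 0 ≤ a → a ≤ b → ∃ K : ℝ,
        ∀ x ∈ Set.Icc a b, ∀ y ∈ Set.Icc a b,
          |iteratedDerivWithin (p - 1) (fun t => u t v) (Set.Ici 0) x -
            iteratedDerivWithin (p - 1) (fun t => u t v) (Set.Ici 0) y| ≤ K * |x - y| := by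
  obtain ⟨m, rfl⟩ : ∃ m, p = m + 2 := ⟨p - 2, by omega⟩
  have hm : Odd m := by simpa [Nat.odd_add] using hpodd
  have hreg : ∀ v, ContDiffLipOn (m + 1) (fun t => u t v) (Ici 0) :=
    contDiffLipOn_of_hasDerivWithinAt_sum (uniqueDiffOn_Ici 0) (convex_Ici 0)
      (contDiffLipOn_abs_pow_mul_self hm) (fun v => -(1 / ν v)) μ (fun v => (hfin v).toFinset)
      fun v t ht => by
        have h := hder v t ht
        rwa [pLap_eq_sum μ ν le_add_self (u t) v (S := (hfin v).toFinset) (by simp),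
          Nat.add_sub_cancel, ← neg_mul] at h
  intro v
  refine ⟨(hreg v).1, fun a b ha _ => ?_⟩
  obtain ⟨K, hK⟩ := ((hreg v).2.mono fun x hx => ha.trans hx.1).exists_lipschitzOnWith_of_compact
    isCompact_Icc
  exact ⟨K, fun x hx y hy => by simpa [Real.dist_eq] using hK.dist_le_mul x hx y hy⟩

/-- pointwise time regularity, `p` odd.
Let `(V,μ,ν)` be a weighted graph with all nodes having finitely many neighbours, and
`p ≥ 3` an odd integer. If `u` solves `∂_t u(t,v) = −L_p u(t,v)` pointwise on `[0,∞)`,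
then for every `v` the map `t ↦ u(t,v)` is `C^{p−1}` on `[0,∞)` and its `(p−1)`-st
derivative is Lipschitz on every compact subinterval of `[0,∞)`. -/
theorem stmt7 {V : Type*} [Countable V]
    (μ : V → V → ℝ) (ν : V → ℝ)
    (hμsymm : ∀ v w, μ v w = μ w v) (hμnn : ∀ v w, 0 ≤ μ v w) (hμdiag : ∀ v, μ v v = 0)
    (hν : ∀ v, 0 < ν v)
    (hfin : ∀ v, {w | μ v w ≠ 0}.Finite)
    (p : ℕ) (hpodd : Odd p) (hp3 : 3 ≤ p)
    (u : ℝ → V → ℝ)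
    (hder : ∀ v, ∀ t, 0 ≤ t →
      HasDerivWithinAt (fun s => u s v) (-(pLap μ ν (p : ℝ) (u t) v)) (Set.Ici 0) t) :
    ∀ v, ContDiffOn ℝ (p - 1 : ℕ) (fun t => u t v) (Set.Ici 0) ∧
      ∀ a b : ℝ, 0 ≤ a → a ≤ b → ∃ K : ℝ,
        ∀ x ∈ Set.Icc a b, ∀ y ∈ Set.Icc a b,
          |iteratedDerivWithin (p - 1) (fun t => u t v) (Set.Ici 0) x -
            iteratedDerivWithin (p - 1) (fun t => u t v) (Set.Ici 0) y| ≤ K * |x - y| :=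
  stmt7_general μ ν hfin p hpodd hp3 u hder
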